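/- Fix p ∈ P and assume that for all b, c ∈ P with p ≤ b and p ≤ c the element S_p(b_2)·c_2 − b_2·S_p(c_2) lies in J(2,P). Let q, r and p be siblings in P (some possibly equal). Then the element S_pT_p(q)·T_p(r) − T_p(q)·S_pT_p(r) lies in J(2,P), where for equal indices one interprets T_p(p) = T(p) and S_pT_p(p) = p_1. -/
import Mathlib


open scoped Classical

noncomputable section

namespace LP2

variable (k : Type) [Field k] (P : Type) [Fintype P] [PartialOrder P]
variable (root : P) (parent : P → P)

/-- Index set for the `u`-variables: `none` is `u_{∅,ρ}`, and `some ⟨(q,p),_⟩` is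
`u_{q,p}` for the pairs `(q,p)` such that the meet of `q` and `p` is the parent of `p`
(in a tree order this means `parent p ≤ q` and `¬ p ≤ q`). -/
abbrev UPair : Type := {qp : P × P // qp.2 ≠ root ∧ parent qp.2 ≤ qp.1 ∧ ¬ qp.2 ≤ qp.1}

/-- The variables of the ring `B(2,P)`. -/
abbrev Vars : Type := (Fin 2 × P) ⊕ (Option (UPair P root parent))

/-- The ring `B(2,P) = B ⊗_k k[x_{[2]×P}]`. -/
abbrev BR := MvPolynomial (Vars P root parent) k

/-- The variable `p₁ = x_{1,p}`. -/
def x1 (p : P) : BR k P root parent := MvPolynomial.X (Sum.inl ((0 : Fin 2), p))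

/-- The variable `p₂ = x_{2,p}`. -/
def x2 (p : P) : BR k P root parent := MvPolynomial.X (Sum.inl ((1 : Fin 2), p))

/-- The variable `u_{∅,ρ}`. -/
def u0 : BR k P root parent := MvPolynomial.X (Sum.inr none)

/-- The variable `u_{q,p}` (and `0` if `(q,p)` is not a valid pair). -/
def uv (q p : P) : BR k P root parent :=
  if h : p ≠ root ∧ parent p ≤ q ∧ ¬ p ≤ q then
    MvPolynomial.X (Sum.inr (some ⟨(q, p), h⟩)) else 0

/-- `T_c(b) = - ∑_{q ≥ c} q₂ u_{q,b}`, for `c` a sibling of `b` distinct from `b`. -/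
def Tc (c b : P) : BR k P root parent :=
  - ∑ q ∈ Finset.univ.filter (fun q => c ≤ q), x2 k P root parent q * uv k P root parent q b

/-- `T_a(b) = - a₂ u_{a,b}` where `a` is the parent of `b`. -/
def Tpar (b : P) : BR k P root parent :=
  - x2 k P root parent (parent b) * uv k P root parent (parent b) b

/-- The set of siblings of `b` (including `b` itself). -/
def sib (b : P) : Finset P := Finset.univ.filter (fun c => c ≠ root ∧ parent c = parent b)

/-- `T(ρ) = u_{∅,ρ}` and `T(b) = -T_a(b) - ∑_{c sibling of b, c ≠ b} T_c(b)`. -/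
def T (b : P) : BR k P root parent :=
  if b = root then u0 k P root parent
  else - Tpar k P root parent b - ∑ c ∈ (sib P root parent b).erase b, Tc k P root parent c b

/-- The set of children of `a`. -/
def children (a : P) : Finset P := Finset.univ.filter (fun b => b ≠ root ∧ parent b = a)

/-- The symbol `S_cT_c(b)`:  it is `b₁` if `c = b`, `-u_{c,b}` if `c` is the parent of `b`,
and `S_c(T_c(b)) = - ∑_{q ≥ c} S_c(q₂) u_{q,b}` if `c` is a sibling of `b` distinct from `b`. -/
def ST (Sx : P → P → BR k P root parent) (c b : P) : BR k P root parent :=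
  if c = b then x1 k P root parent b
  else if c = parent b then - uv k P root parent c b
  else - ∑ q ∈ Finset.univ.filter (fun q => c ≤ q), Sx c q * uv k P root parent q b

/-- The data of the recursively defined elements `D(a)^x` and `S_a(b₂)` of `B(2,P)`,
pinned down by their defining equations.  `hD` says: for any enumeration
`a = e 0, e 1, …` of `a` together with its children `e 1, …, e m`, the element
`D(a)^{e i}` is the signed maximal minor `(-1)^i |M(a)^{e i}|` of the `m × (m+1)` matrix
`M(a) = [S_{e i}T_{e i}(e (j+1))]`.  (For `a` maximal this gives `D(a)^a = 1`.)
`hSx` says: along any saturated chain `a = c 0 ⋖ c 1 ⋖ ⋯ ⋖ c n = b`,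
`S_a(b₂) = R(a,b) D(b)^b` where `R(a,b) = ∏ D(c i)^{c (i+1)}`. -/
structure DefData where
  D : P → P → BR k P root parent
  Sx : P → P → BR k P root parent
  hD : ∀ (a : P) (m : ℕ) (e : Fin (m+1) → P), Function.Injective e → e 0 = a →
      (∀ j : Fin m, e j.succ ∈ children P root parent a) →
      (∀ b ∈ children P root parent a, ∃ j : Fin m, e j.succ = b) →
      ∀ i : Fin (m+1),
        D a (e i) = (-1 : BR k P root parent) ^ (i : ℕ) *
          Matrix.det (Matrix.of fun (j l : Fin m) =>
            ST k P root parent Sx (e (i.succAbove l)) (e j.succ))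
  hSx : ∀ (n : ℕ) (c : Fin (n+1) → P),
      (∀ i : Fin n, c i.castSucc ⋖ c i.succ) →
      Sx (c 0) (c (Fin.last n)) =
        (∏ i : Fin n, D (c i.castSucc) (c i.succ)) * D (c (Fin.last n)) (c (Fin.last n))

/-- The ideal `J(2,P)`, generated by the deformations `p₁q₂ - T(p)S_p(q₂)` for `p ≤ q`. -/
def Jideal (dd : DefData k P root parent) : Ideal (BR k P root parent) :=
  Ideal.span {f | ∃ p q : P, p ≤ q ∧
    f = x1 k P root parent p * x2 k P root parent q - T k P root parent p * dd.Sx p q}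


/-- Fix `p` and assume Proposition `pro:FlatBasic` holds for `p`:
for all `b, c ≥ p`, `S_p(b₂)·c₂ − b₂·S_p(c₂) ∈ J(2,P)`.  Let `q, r, p` be siblings
(some possibly equal).  Then `S_pT_p(q)·T_p(r) − T_p(q)·S_pT_p(r) ∈ J(2,P)`, where
`T_p(p)` is interpreted as `T(p)` and `S_pT_p(p)` as `p₁`. -/
theorem STT_mem
    (hroot : ∀ p : P, root ≤ p)
    (htree : ∀ b : P, IsChain (· ≤ ·) {a : P | a ≤ b})
    (hpar : ∀ p : P, p ≠ root → parent p ⋖ p)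
    (dd : DefData k P root parent)
    (p q r : P)
    (hbasic : ∀ b c : P, p ≤ b → p ≤ c →
      dd.Sx p b * x2 k P root parent c - x2 k P root parent b * dd.Sx p c
        ∈ Jideal k P root parent dd)
    (hq : q = p ∨ (p ≠ root ∧ q ≠ root ∧ parent p = parent q))
    (hr : r = p ∨ (p ≠ root ∧ r ≠ root ∧ parent p = parent r)) :
    ST k P root parent dd.Sx p q *
        (if r = p then T k P root parent p else Tc k P root parent p r) -
      (if q = p then T k P root parent p else Tc k P root parent p q) *
        ST k P root parent dd.Sx p r
      ∈ Jideal k P root parent dd := by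
  classical
  set J := Jideal k P root parent dd with hJdef
  have hgen : ∀ a b : P, a ≤ b →
      x1 k P root parent a * x2 k P root parent b -
        T k P root parent a * dd.Sx a b ∈ J := by
    intro a b hab
    exact Ideal.subset_span ⟨a, b, hab, rfl⟩
  by_cases hqp : q = p
  · by_cases hrp : r = p
    · -- both equal p
      rw [hqp, hrp]
      simp only [ST, eq_self_iff_true, if_true]
      have h0 : x1 k P root parent p * T k P root parent p -
          T k P root parent p * x1 k P root parent p = 0 := by ring
      rw [h0]
      exact Ideal.zero_mem _
    · -- q = p, r ≠ p
      obtain ⟨hproot, hrroot, hparpr⟩ := hr.resolve_left hrp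
      have hppr : p ≠ parent r := by
        intro h
        have h2 : parent p = p := by rw [hparpr, ← h]
        exact absurd (hpar p hproot).lt (by rw [h2]; exact lt_irrefl p)
      rw [hqp]
      rw [if_neg hrp]
      simp only [ST, eq_self_iff_true, if_true, if_neg (Ne.symm hrp), if_neg hppr, Tc]
      rw [mul_neg, mul_neg, neg_sub_neg, Finset.mul_sum, Finset.mul_sum,
        ← Finset.sum_sub_distrib]
      refine Ideal.sum_mem _ fun s hs => ?_
      have h1 := Ideal.mul_mem_right (uv k P root parent s r) _
        (J.neg_mem (hgen p s (Finset.mem_filter.mp hs).2))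
      convert h1 using 1
      ring
  · by_cases hrp : r = p
    · -- q ≠ p, r = p
      obtain ⟨hproot, hqroot, hparpq⟩ := hq.resolve_left hqp
      have hppq : p ≠ parent q := by
        intro h
        have h2 : parent p = p := by rw [hparpq, ← h]
        exact absurd (hpar p hproot).lt (by rw [h2]; exact lt_irrefl p)
      rw [hrp]
      rw [if_neg hqp]
      simp only [ST, eq_self_iff_true, if_true, if_neg (Ne.symm hqp), if_neg hppq, Tc]
      rw [neg_mul, neg_mul, neg_sub_neg, Finset.sum_mul, Finset.sum_mul,
        ← Finset.sum_sub_distrib]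
      refine Ideal.sum_mem _ fun s hs => ?_
      have h1 := Ideal.mul_mem_right (uv k P root parent s q) _
        (hgen p s (Finset.mem_filter.mp hs).2)
      convert h1 using 1
      ring
    · -- q ≠ p, r ≠ p
      obtain ⟨hproot, hqroot, hparpq⟩ := hq.resolve_left hqp
      obtain ⟨_, hrroot, hparpr⟩ := hr.resolve_left hrp
      have hppq : p ≠ parent q := by
        intro h
        have h2 : parent p = p := by rw [hparpq, ← h]
        exact absurd (hpar p hproot).lt (by rw [h2]; exact lt_irrefl p)
      have hppr : p ≠ parent r := by
        intro h
        have h2 : parent p = p := by rw [hparpr, ← h]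
        exact absurd (hpar p hproot).lt (by rw [h2]; exact lt_irrefl p)
      rw [if_neg hqp, if_neg hrp]
      simp only [ST, if_neg (Ne.symm hqp), if_neg hppq, if_neg (Ne.symm hrp),
        if_neg hppr, Tc]
      rw [neg_mul_neg, neg_mul_neg, Finset.sum_mul_sum, Finset.sum_mul_sum,
        ← Finset.sum_sub_distrib]
      refine Ideal.sum_mem _ fun s hs => ?_
      rw [← Finset.sum_sub_distrib]
      refine Ideal.sum_mem _ fun t ht => ?_
      have h1 := Ideal.mul_mem_right
        (uv k P root parent s q * uv k P root parent t r) _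
        (hbasic s t (Finset.mem_filter.mp hs).2 (Finset.mem_filter.mp ht).2)
      convert h1 using 1
      ring

end LP2
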